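/- Let n be a positive integer and let a, b be n×n real symmetric positive definite matrices. Then the matrix a b² a is symmetric positive definite, and the matrix k := b^{−1} a^{−1} (a b² a)^{1/2} satisfies k kᵀ = I, kᵀ k = I (i.e., k is orthogonal), and a b k = (a b² a)^{1/2}; in particular a b k is symmetric positive definite. -/

import Mathlib

open Matrix

/-!
Since `a b² a = (a b) (a b)ᵀ` with `a b` invertible, it is positive definite; its square root `s`
is then a symmetric invertible matrix with `s² = (a b) (a b)ᵀ`, which makes `k = (a b)⁻¹ s`
orthogonal. This is the polar decomposition `a b = s kᵀ`.
-/

section OldSqrt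

open scoped ComplexOrder

/-- The positive semidefinite square root of a positive semidefinite matrix
(the definition `Matrix.PosSemidef.sqrt` of the older Mathlib, since removed). -/
noncomputable def Matrix.PosSemidef.sqrt {n 𝕜 : Type*} [Fintype n] [DecidableEq n] [RCLike 𝕜]
    {A : Matrix n n 𝕜} (hA : A.PosSemidef) : Matrix n n 𝕜 :=
  (hA.isHermitian.eigenvectorUnitary : Matrix n n 𝕜) *
    diagonal ((↑) ∘ (√·) ∘ hA.isHermitian.eigenvalues) *
    (star (hA.isHermitian.eigenvectorUnitary : Matrix n n 𝕜))

end OldSqrt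

namespace Matrix

variable {m 𝕜 : Type*} [Fintype m] [DecidableEq m] [RCLike 𝕜]

open scoped ComplexOrder

namespace PosSemidef

variable {A : Matrix m m 𝕜} (hA : A.PosSemidef)
include hA

theorem posSemidef_sqrt : hA.sqrt.PosSemidef :=
  PosSemidef.mul_mul_conjTranspose_same
    (posSemidef_diagonal_iff.2 fun _ => RCLike.ofReal_nonneg.2 (Real.sqrt_nonneg _)) _

theorem sqrt_mul_self : hA.sqrt * hA.sqrt = A := by
  set U := (hA.isHermitian.eigenvectorUnitary : Matrix m m 𝕜)
  set D := diagonal (((↑) : ℝ → 𝕜) ∘ (√·) ∘ hA.isHermitian.eigenvalues)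
  have hU : star U * U = 1 := Unitary.star_mul_self_of_mem hA.isHermitian.eigenvectorUnitary.2
  have hD : D * D = diagonal (((↑) : ℝ → 𝕜) ∘ hA.isHermitian.eigenvalues) := by
    rw [diagonal_mul_diagonal]
    congr 1
    funext i
    simp only [Function.comp_apply]
    rw [← RCLike.ofReal_mul, Real.mul_self_sqrt (hA.eigenvalues_nonneg i)]
  conv_rhs => rw [hA.isHermitian.spectral_theorem, Unitary.conjStarAlgAut_apply]
  calc hA.sqrt * hA.sqrt = U * (D * (star U * U) * D) * star U := by
        simp only [sqrt, U, D, Matrix.mul_assoc]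
    _ = _ := by rw [hU, Matrix.mul_one, hD]

end PosSemidef

theorem PosDef.posDef_sqrt {A : Matrix m m 𝕜} (hA : A.PosDef) : hA.posSemidef.sqrt.PosDef := by
  rw [hA.posSemidef.posSemidef_sqrt.posDef_iff_det_ne_zero]
  intro h
  have := congrArg det hA.posSemidef.sqrt_mul_self
  rw [det_mul, h, zero_mul] at this
  exact (hA.posSemidef.posDef_iff_det_ne_zero.1 hA) this.symm

theorem inv_mul_mem_unitaryGroup {d s : Matrix m m 𝕜} (hd : IsUnit d) (hs : s.IsHermitian)
    (hsd : s * s = d * dᴴ) : d⁻¹ * s ∈ unitaryGroup m 𝕜 := by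
  have hdet : IsUnit d.det := (isUnit_iff_isUnit_det d).1 hd
  rw [mem_unitaryGroup_iff, star_eq_conjTranspose, conjTranspose_mul, hs.eq,
    conjTranspose_nonsing_inv, Matrix.mul_assoc, ← Matrix.mul_assoc s, hsd, Matrix.mul_assoc d,
    mul_nonsing_inv _ (by simpa using hdet.star), Matrix.mul_one, nonsing_inv_mul _ hdet]

end Matrix

theorem spd_orthogonal_decomposition_general {n : ℕ}
    (a b : Matrix (Fin n) (Fin n) ℝ)
    (ha : a.PosDef) (hb : b.PosDef) :
    ∃ hpd : (a * (b * b) * a).PosDef,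
      (b⁻¹ * a⁻¹ * hpd.posSemidef.sqrt) * (b⁻¹ * a⁻¹ * hpd.posSemidef.sqrt)ᵀ = 1 ∧
      (b⁻¹ * a⁻¹ * hpd.posSemidef.sqrt)ᵀ * (b⁻¹ * a⁻¹ * hpd.posSemidef.sqrt) = 1 ∧
      a * b * (b⁻¹ * a⁻¹ * hpd.posSemidef.sqrt) = hpd.posSemidef.sqrt ∧
      (a * b * (b⁻¹ * a⁻¹ * hpd.posSemidef.sqrt)).PosDef := by
  have hab : IsUnit (a * b) := ha.isUnit.mul hb.isUnit
  have hgram : a * (b * b) * a = a * b * (a * b)ᴴ := by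
    rw [conjTranspose_mul, ha.isHermitian.eq, hb.isHermitian.eq]
    simp only [Matrix.mul_assoc]
  have hpd : (a * (b * b) * a).PosDef := by
    rw [hgram]
    exact PosDef.mul_conjTranspose_self _ (vecMul_injective_iff_isUnit.2 hab)
  have hk : b⁻¹ * a⁻¹ * hpd.posSemidef.sqrt ∈ orthogonalGroup (Fin n) ℝ := by
    rw [← Matrix.mul_inv_rev]
    exact inv_mul_mem_unitaryGroup hab hpd.posSemidef.posSemidef_sqrt.isHermitian
      (hpd.posSemidef.sqrt_mul_self.trans hgram)
  have hsqrt : a * b * (b⁻¹ * a⁻¹ * hpd.posSemidef.sqrt) = hpd.posSemidef.sqrt := by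
    rw [← Matrix.mul_inv_rev,
      Matrix.mul_nonsing_inv_cancel_left _ _ ((isUnit_iff_isUnit_det _).1 hab)]
  refine ⟨hpd, (mem_orthogonalGroup_iff _ _).1 hk, (mem_orthogonalGroup_iff' _ _).1 hk, hsqrt, ?_⟩
  rw [hsqrt]
  exact hpd.posDef_sqrt

/-- Lemma C.4: for real SPD matrices `a, b`, the matrix `a b² a` is SPD, and
`k = b⁻¹ a⁻¹ (a b² a)^{1/2}` is orthogonal with `a b k = (a b² a)^{1/2}`; in particular
`a b k` is SPD. -/
theorem spd_orthogonal_decomposition {n : ℕ} (hn : 0 < n)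
    (a b : Matrix (Fin n) (Fin n) ℝ)
    (ha : a.PosDef) (hb : b.PosDef) :
    ∃ hpd : (a * (b * b) * a).PosDef,
      (b⁻¹ * a⁻¹ * hpd.posSemidef.sqrt) * (b⁻¹ * a⁻¹ * hpd.posSemidef.sqrt)ᵀ = 1 ∧
      (b⁻¹ * a⁻¹ * hpd.posSemidef.sqrt)ᵀ * (b⁻¹ * a⁻¹ * hpd.posSemidef.sqrt) = 1 ∧
      a * b * (b⁻¹ * a⁻¹ * hpd.posSemidef.sqrt) = hpd.posSemidef.sqrt ∧
      (a * b * (b⁻¹ * a⁻¹ * hpd.posSemidef.sqrt)).PosDef :=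
  spd_orthogonal_decomposition_general a b ha hb
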